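/- arXiv:2605.28165 — 4 statements merged into one kernel-verified Lean document; each statement's English description precedes it below -/
import Mathlib

section
/- Let {(x_i, y_i)}_{i=1}^n be a finite dataset with x_i ∈ ℝ^d and y_i ∈ ℝ, let R_ERM(w) = (1/n) Σ_{i=1}^n (y_i − wᵀx_i)², and let x̄ = (1/n) Σ_i x_i, ȳ = (1/n) Σ_i y_i. Let λ be a [0,1]-valued random variable distributed as Beta(α, α) for some α > 0 (so that E[λ] = 1/2), set c_α = E[λ(1−λ)], and let i, j be independent indices uniform on {1,…,n}, independent of λ. Define the Mixup risk R_Mixup(w) = E_{i,j,λ}[(ỹ − wᵀx̃)²] with x̃ = λx_i + (1−λ)x_j and ỹ = λy_i + (1−λ)y_j. Then for every w ∈ ℝ^d, R_Mixup(w) = (1 − 2c_α) R_ERM(w) + 2c_α (ȳ − wᵀx̄)². -/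
open MeasureTheory Finset

/-!
The residual of a mixed sample is the same mixture of the two residuals, and
`(t a + (1 - t) b)² = t a² + (1 - t) b² - t (1 - t) (a - b)²`. Taking expectations and
summing over all ordered pairs `(i, j)`, the first two terms give `n ∑ᵢ aᵢ²` and
`∑ᵢ ∑ⱼ (aᵢ - aⱼ)² = 2n ∑ᵢ aᵢ² - 2 (∑ᵢ aᵢ)²`.
-/

section Residuals

variable {ι κ : Type*} [Fintype ι] [Fintype κ]

lemma residual_convex_comb (w u v : κ → ℝ) (a b t : ℝ) :
    t * a + (1 - t) * b - ∑ k, w k * (t * u k + (1 - t) * v k)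
      = t * (a - ∑ k, w k * u k) + (1 - t) * (b - ∑ k, w k * v k) := by
  simp only [mul_add, sum_add_distrib, mul_left_comm (w _), ← mul_sum]
  ring

lemma residual_mean (w : κ → ℝ) (x : ι → κ → ℝ) (y : ι → ℝ) (c : ℝ) :
    c * ∑ i, y i - ∑ k, w k * (c * ∑ i, x i k) = c * ∑ i, (y i - ∑ k, w k * x i k) := by
  rw [sum_sub_distrib, mul_sub, sum_comm (f := fun i k => w k * x i k)]
  simp only [mul_sum, mul_left_comm c]

end Residuals

section Moments

variable {Ω : Type*} [MeasurableSpace Ω] {P : Measure Ω} {lam : Ω → ℝ}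

lemma MeasureTheory.Integrable.mul_one_sub_of_mem_Icc (hlam : Integrable lam P)
    (hmem : ∀ ω, lam ω ∈ Set.Icc (0 : ℝ) 1) :
    Integrable (fun ω => lam ω * (1 - lam ω)) P := by
  refine hlam.mono (hlam.aestronglyMeasurable.mul
    (aestronglyMeasurable_const.sub hlam.aestronglyMeasurable)) (ae_of_all _ ?_)
  intro ω
  obtain ⟨h0, h1⟩ := hmem ω
  rw [Real.norm_eq_abs, Real.norm_eq_abs, abs_of_nonneg (by nlinarith), abs_of_nonneg h0]
  nlinarith

lemma integral_convex_comb_sq [IsProbabilityMeasure P] (hlam : Integrable lam P)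
    (hvar : Integrable (fun ω => lam ω * (1 - lam ω)) P) (a b : ℝ) :
    ∫ ω, (lam ω * a + (1 - lam ω) * b) ^ 2 ∂P
      = (∫ ω, lam ω ∂P) * a ^ 2 + (1 - ∫ ω, lam ω ∂P) * b ^ 2
        - (∫ ω, lam ω * (1 - lam ω) ∂P) * (a - b) ^ 2 := by
  have hsq : ∀ ω, (lam ω * a + (1 - lam ω) * b) ^ 2
      = a ^ 2 * lam ω + b ^ 2 * (1 - lam ω) - (a - b) ^ 2 * (lam ω * (1 - lam ω)) := by
    intro ω; ring
  have hcompl : Integrable (fun ω => 1 - lam ω) P := (integrable_const 1).sub hlam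
  have hmix : Integrable (fun ω => a ^ 2 * lam ω + b ^ 2 * (1 - lam ω)) P :=
    (hlam.const_mul _).add (hcompl.const_mul _)
  simp_rw [hsq]
  rw [integral_sub hmix (hvar.const_mul _), integral_add (hlam.const_mul _) (hcompl.const_mul _),
    integral_const_mul, integral_const_mul, integral_const_mul,
    integral_sub (integrable_const 1) hlam, integral_const, probReal_univ, one_smul]
  ring

end Moments

lemma sum_sum_sub_sq {ι : Type*} [Fintype ι] (a : ι → ℝ) :
    ∑ i, ∑ j, (a i - a j) ^ 2 = 2 * (Fintype.card ι * ∑ i, a i ^ 2 - (∑ i, a i) ^ 2) := by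
  simp only [sub_sq, sum_add_distrib, sum_sub_distrib, sum_const, card_univ, nsmul_eq_mul,
    ← mul_sum, ← sum_mul, mul_assoc]
  ring

lemma inv_card_sq_mul_sum_sum_mix_sq {ι : Type*} [Fintype ι] (a : ι → ℝ) (m c : ℝ) :
    (1 / (Fintype.card ι : ℝ) ^ 2)
        * ∑ i, ∑ j, (m * a i ^ 2 + (1 - m) * a j ^ 2 - c * (a i - a j) ^ 2)
      = (1 - 2 * c) * ((1 / Fintype.card ι : ℝ) * ∑ i, a i ^ 2)
        + 2 * c * ((1 / Fintype.card ι : ℝ) * ∑ i, a i) ^ 2 := by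
  rcases isEmpty_or_nonempty ι with hι | hι
  · simp
  have hcard : (Fintype.card ι : ℝ) ≠ 0 := by positivity
  have hsum : ∑ i, ∑ j, (m * a i ^ 2 + (1 - m) * a j ^ 2 - c * (a i - a j) ^ 2)
      = Fintype.card ι * ∑ i, a i ^ 2 - c * ∑ i, ∑ j, (a i - a j) ^ 2 := by
    simp only [sum_sub_distrib, sum_add_distrib, ← mul_sum, sum_const, card_univ, nsmul_eq_mul]
    ring
  rw [hsum, sum_sum_sub_sq]
  field_simp
  ring

theorem mixup_risk_eq_general
    {Ω : Type*} [MeasurableSpace Ω] (P : Measure Ω) [IsProbabilityMeasure P]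
    (d n : ℕ)
    (x : Fin n → Fin d → ℝ) (y : Fin n → ℝ)
    (lam : Ω → ℝ) (hlam_meas : Measurable lam)
    (hlam_mem : ∀ ω, lam ω ∈ Set.Icc (0 : ℝ) 1)
    (w : Fin d → ℝ) :
    (1 / (n : ℝ) ^ 2) * ∑ i, ∑ j, ∫ ω,
        (lam ω * y i + (1 - lam ω) * y j
          - ∑ k, w k * (lam ω * x i k + (1 - lam ω) * x j k)) ^ 2 ∂P
      = (1 - 2 * ∫ ω, lam ω * (1 - lam ω) ∂P)
          * ((1 / n : ℝ) * ∑ i, (y i - ∑ k, w k * x i k) ^ 2)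
        + 2 * (∫ ω, lam ω * (1 - lam ω) ∂P)
          * ((1 / n : ℝ) * ∑ i, y i - ∑ k, w k * ((1 / n : ℝ) * ∑ i, x i k)) ^ 2 := by
  have hlam : Integrable lam P :=
    Integrable.of_mem_Icc 0 1 hlam_meas.aemeasurable (ae_of_all _ hlam_mem)
  have hvar := hlam.mul_one_sub_of_mem_Icc hlam_mem
  simp_rw [residual_convex_comb, integral_convex_comb_sq hlam hvar, residual_mean]
  simpa using inv_card_sq_mul_sum_sum_mix_sq (fun i => y i - ∑ k, w k * x i k)
    (∫ ω, lam ω ∂P) (∫ ω, lam ω * (1 - lam ω) ∂P)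

/-- **Mixup risk decomposition for linear least squares.**
Let `lam` be a `[0,1]`-valued random variable with mean `1/2` (as holds for
`lam ~ Beta(α,α)`), and `c = E[lam(1-lam)]`.  Then the Mixup risk of a linear
model satisfies `R_Mixup(w) = (1 - 2c) R_ERM(w) + 2c (ȳ - wᵀx̄)²`. -/
theorem mixup_risk_eq
    {Ω : Type*} [MeasurableSpace Ω] (P : Measure Ω) [IsProbabilityMeasure P]
    (d n : ℕ) (hn : 0 < n)
    (x : Fin n → Fin d → ℝ) (y : Fin n → ℝ)
    (lam : Ω → ℝ) (hlam_meas : Measurable lam)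
    (hlam_mem : ∀ ω, lam ω ∈ Set.Icc (0 : ℝ) 1)
    (hlam_mean : ∫ ω, lam ω ∂P = 1 / 2)
    (w : Fin d → ℝ) :
    (1 / (n : ℝ) ^ 2) * ∑ i, ∑ j, ∫ ω,
        (lam ω * y i + (1 - lam ω) * y j
          - ∑ k, w k * (lam ω * x i k + (1 - lam ω) * x j k)) ^ 2 ∂P
      = (1 - 2 * ∫ ω, lam ω * (1 - lam ω) ∂P)
          * ((1 / n : ℝ) * ∑ i, (y i - ∑ k, w k * x i k) ^ 2)
        + 2 * (∫ ω, lam ω * (1 - lam ω) ∂P)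
          * ((1 / n : ℝ) * ∑ i, y i - ∑ k, w k * ((1 / n : ℝ) * ∑ i, x i k)) ^ 2 :=
  mixup_risk_eq_general P d n x y lam hlam_meas hlam_mem w
end

section
/- Let {(x_i, y_i)}_{i=1}^n be a finite dataset with x_i ∈ ℝ^d and y_i ∈ ℝ, let R_ERM(w) = (1/n) Σ_{i=1}^n (y_i − wᵀx_i)², and let Var_n(y − wᵀx) := (1/n) Σ_i (y_i − wᵀx_i)² − ((1/n) Σ_i (y_i − wᵀx_i))² denote the empirical variance of the residuals. Let λ ∼ Beta(α, α) (α > 0), c_α = E[λ(1−λ)], and let R_Mixup(w) = E_{i,j,λ}[(λy_i + (1−λ)y_j − wᵀ(λx_i + (1−λ)x_j))²] with i, j independent uniform on {1,…,n}. Then for every w ∈ ℝ^d, R_Mixup(w) − R_ERM(w) = −2c_α · Var_n(y − wᵀx). -/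
open MeasureTheory ProbabilityTheory Finset

/-- **Mixup as a negative variance penalty.**
With `lam` a `[0,1]`-valued random variable of mean `1/2` (as holds for
`lam ~ Beta(α,α)`) and `c = E[lam(1-lam)]`, the Mixup risk of a linear model
satisfies `R_Mixup(w) - R_ERM(w) = -2c · Var_n(y - wᵀx)`, where `Var_n` is the
biased empirical variance of the residuals. -/
theorem mixup_risk_sub_erm_eq_neg_var
    {Ω : Type*} [MeasurableSpace Ω] (P : Measure Ω) [IsProbabilityMeasure P]
    (d n : ℕ) (hn : 0 < n)
    (x : Fin n → Fin d → ℝ) (y : Fin n → ℝ)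
    (lam : Ω → ℝ) (hlam_meas : Measurable lam)
    (hlam_mem : ∀ ω, lam ω ∈ Set.Icc (0 : ℝ) 1)
    (hlam_mean : ∫ ω, lam ω ∂P = 1 / 2)
    (w : Fin d → ℝ) :
    (1 / (n : ℝ) ^ 2) * (∑ i, ∑ j, ∫ ω,
        (lam ω * y i + (1 - lam ω) * y j
          - ∑ k, w k * (lam ω * x i k + (1 - lam ω) * x j k)) ^ 2 ∂P)
      - (1 / n : ℝ) * ∑ i, (y i - ∑ k, w k * x i k) ^ 2
      = -(2 * ∫ ω, lam ω * (1 - lam ω) ∂P)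
          * ((1 / n : ℝ) * ∑ i, (y i - ∑ k, w k * x i k) ^ 2
              - ((1 / n : ℝ) * ∑ i, (y i - ∑ k, w k * x i k)) ^ 2) := by
  set r : Fin n → ℝ := fun i => y i - ∑ k, w k * x i k with hr
  -- integrability facts
  have hA : Integrable (fun ω => lam ω ^ 2) P := by
    refine (integrable_const (1 : ℝ)).mono' (hlam_meas.pow_const 2).aestronglyMeasurable ?_
    filter_upwards with ω
    have h := hlam_mem ω
    rw [Real.norm_eq_abs, abs_of_nonneg (sq_nonneg _)]
    nlinarith [h.1, h.2]
  have hC : Integrable (fun ω => lam ω * (1 - lam ω)) P := by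
    refine (integrable_const (1 : ℝ)).mono'
      (hlam_meas.mul (measurable_const.sub hlam_meas)).aestronglyMeasurable ?_
    filter_upwards with ω
    have h := hlam_mem ω
    rw [Real.norm_eq_abs, abs_of_nonneg (by nlinarith [h.1, h.2])]
    nlinarith [h.1, h.2]
  have hB : Integrable (fun ω => (1 - lam ω) ^ 2) P := by
    refine (integrable_const (1 : ℝ)).mono'
      ((measurable_const.sub hlam_meas).pow_const 2).aestronglyMeasurable ?_
    filter_upwards with ω
    have h := hlam_mem ω
    rw [Real.norm_eq_abs, abs_of_nonneg (sq_nonneg _)]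
    nlinarith [h.1, h.2]
  set A := ∫ ω, lam ω ^ 2 ∂P with hAdef
  set C := ∫ ω, lam ω * (1 - lam ω) ∂P with hCdef
  set B := ∫ ω, (1 - lam ω) ^ 2 ∂P with hBdef
  have hlam_int : Integrable lam P := by
    refine (integrable_const (1 : ℝ)).mono' hlam_meas.aestronglyMeasurable ?_
    filter_upwards with ω
    have h := hlam_mem ω
    rw [Real.norm_eq_abs, abs_of_nonneg h.1]; exact h.2
  have hAC : A + C = 1 / 2 := by
    have heq : (fun ω => lam ω ^ 2 + lam ω * (1 - lam ω)) = fun ω => lam ω := by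
      funext ω; ring
    rw [hAdef, hCdef, ← integral_add hA hC, heq, hlam_mean]
  have hBC : B + C = 1 / 2 := by
    have heq : (fun ω => (1 - lam ω) ^ 2 + lam ω * (1 - lam ω)) = fun ω => 1 - lam ω := by
      funext ω; ring
    rw [hBdef, hCdef, ← integral_add hB hC, heq, integral_sub (integrable_const 1) hlam_int,
      integral_const, hlam_mean]
    norm_num
  -- compute the inner integral
  have hinner : ∀ i j : Fin n,
      (∫ ω, (lam ω * y i + (1 - lam ω) * y j
          - ∑ k, w k * (lam ω * x i k + (1 - lam ω) * x j k)) ^ 2 ∂P)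
        = r i ^ 2 * A + 2 * (r i * r j) * C + r j ^ 2 * B := by
    intro i j
    have heq : (fun ω => (lam ω * y i + (1 - lam ω) * y j
          - ∑ k, w k * (lam ω * x i k + (1 - lam ω) * x j k)) ^ 2)
        = fun ω => r i ^ 2 * lam ω ^ 2 + 2 * (r i * r j) * (lam ω * (1 - lam ω))
            + r j ^ 2 * (1 - lam ω) ^ 2 := by
      funext ω
      have hx : ∑ k, w k * (lam ω * x i k + (1 - lam ω) * x j k)
          = lam ω * ∑ k, w k * x i k + (1 - lam ω) * ∑ k, w k * x j k := by
        rw [Finset.mul_sum, Finset.mul_sum, ← Finset.sum_add_distrib]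
        exact Finset.sum_congr rfl fun k _ => by ring
      rw [hx, hr]; ring
    have h1 : Integrable (fun ω => r i ^ 2 * lam ω ^ 2) P := hA.const_mul _
    have h2 : Integrable (fun ω => 2 * (r i * r j) * (lam ω * (1 - lam ω))) P := hC.const_mul _
    have h3 : Integrable (fun ω => r j ^ 2 * (1 - lam ω) ^ 2) P := hB.const_mul _
    have h12 : Integrable (fun ω => r i ^ 2 * lam ω ^ 2
        + 2 * (r i * r j) * (lam ω * (1 - lam ω))) P := h1.add h2
    rw [heq, integral_add h12 h3, integral_add h1 h2,
      integral_const_mul, integral_const_mul, integral_const_mul]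
  simp_rw [hinner]
  -- sum computation
  have hsum : ∑ i, ∑ j, (r i ^ 2 * A + 2 * (r i * r j) * C + r j ^ 2 * B)
      = (n : ℝ) * ((∑ i, r i ^ 2) * A) + (2 * C) * ((∑ i, r i) * (∑ i, r i))
        + (n : ℝ) * ((∑ i, r i ^ 2) * B) := by
    calc ∑ i, ∑ j, (r i ^ 2 * A + 2 * (r i * r j) * C + r j ^ 2 * B)
        = (∑ i : Fin n, ∑ j : Fin n, r i ^ 2 * A)
          + (∑ i : Fin n, ∑ j : Fin n, (2 * C) * (r i * r j))
          + (∑ i : Fin n, ∑ j : Fin n, r j ^ 2 * B) := by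
          simp_rw [← Finset.sum_add_distrib]
          exact Finset.sum_congr rfl fun i _ => Finset.sum_congr rfl fun j _ => by ring
      _ = _ := by
          congr 1
          · congr 1
            · simp_rw [Finset.sum_const, Finset.card_univ, Fintype.card_fin, nsmul_eq_mul]
              rw [← Finset.mul_sum, ← Finset.sum_mul]
            · rw [Finset.sum_mul_sum]
              simp_rw [← Finset.mul_sum]
          · simp_rw [← Finset.sum_mul]
            rw [Finset.sum_const, Finset.card_univ, Fintype.card_fin, nsmul_eq_mul, mul_assoc]
  rw [hsum]
  have hn' : (n : ℝ) ≠ 0 := Nat.cast_ne_zero.mpr hn.ne'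
  have hA' : A = 1 / 2 - C := by linarith
  have hB' : B = 1 / 2 - C := by linarith
  rw [hA', hB']
  field_simp
  ring
end

section
/- Let {(x_i, y_i)}_{i=1}^n be a finite dataset with x_i ∈ ℝ^d and y_i ∈ ℝ, and consider affine predictors h_{w,b}(x) = wᵀx + b. Let F_ERM(w, b) = (1/n) Σ_i (y_i − wᵀx_i − b)², and for λ ∼ Beta(α, α) with c_α = E[λ(1−λ)] ∈ (0, 1/2) and i, j independent uniform indices, let F_Mixup(w, b) = E_{i,j,λ}[(λy_i + (1−λ)y_j − wᵀ(λx_i + (1−λ)x_j) − b)²]. If (w, b) is a global minimizer of F_ERM, then (w, b) is also a global minimizer of F_Mixup. In particular, Mixup leaves the linear least-squares solution unchanged. -/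
open MeasureTheory Finset

/-- **Mixup leaves the affine least-squares solution unchanged.**
With `lam` a `[0,1]`-valued random variable of mean `1/2` (as holds for
`lam ~ Beta(α,α)`, whose `c_α = E[lam(1-lam)]` lies in `(0, 1/2)`), any global
minimizer `(w, b)` of the affine empirical risk `F_ERM` is also a global
minimizer of the Mixup risk `F_Mixup`. -/
theorem erm_minimizer_is_mixup_minimizer
    {Ω : Type*} [MeasurableSpace Ω] (P : Measure Ω) [IsProbabilityMeasure P]
    (d n : ℕ) (hn : 0 < n)
    (x : Fin n → Fin d → ℝ) (y : Fin n → ℝ)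
    (lam : Ω → ℝ) (hlam_meas : Measurable lam)
    (hlam_mem : ∀ ω, lam ω ∈ Set.Icc (0 : ℝ) 1)
    (hlam_mean : ∫ ω, lam ω ∂P = 1 / 2)
    (hc_pos : 0 < ∫ ω, lam ω * (1 - lam ω) ∂P)
    (hc_lt : (∫ ω, lam ω * (1 - lam ω) ∂P) < 1 / 2)
    (w : Fin d → ℝ) (b : ℝ)
    (hmin : ∀ (w' : Fin d → ℝ) (b' : ℝ),
      (1 / n : ℝ) * ∑ i, (y i - ∑ k, w k * x i k - b) ^ 2
        ≤ (1 / n : ℝ) * ∑ i, (y i - ∑ k, w' k * x i k - b') ^ 2) :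
    ∀ (w' : Fin d → ℝ) (b' : ℝ),
      (1 / (n : ℝ) ^ 2) * ∑ i, ∑ j, ∫ ω,
          (lam ω * y i + (1 - lam ω) * y j
            - ∑ k, w k * (lam ω * x i k + (1 - lam ω) * x j k) - b) ^ 2 ∂P
        ≤ (1 / (n : ℝ) ^ 2) * ∑ i, ∑ j, ∫ ω,
          (lam ω * y i + (1 - lam ω) * y j
            - ∑ k, w' k * (lam ω * x i k + (1 - lam ω) * x j k) - b') ^ 2 ∂P := by
  intro w' b'
  have hn' : (0:ℝ) < n := by exact_mod_cast hn
  -- integrability of lam and lam^2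
  have hint1 : Integrable lam P := by
    refine Integrable.mono' (integrable_const 1) hlam_meas.aestronglyMeasurable ?_
    filter_upwards with ω
    rw [Real.norm_eq_abs, abs_le]
    exact ⟨by linarith [(hlam_mem ω).1], (hlam_mem ω).2⟩
  have hint2 : Integrable (fun ω => lam ω ^ 2) P := by
    refine Integrable.mono' (integrable_const 1) (hlam_meas.pow_const 2).aestronglyMeasurable ?_
    filter_upwards with ω
    rw [Real.norm_eq_abs, abs_le]
    constructor
    · nlinarith [sq_nonneg (lam ω)]
    · nlinarith [(hlam_mem ω).1, (hlam_mem ω).2]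
  set m2 := ∫ ω, lam ω ^ 2 ∂P with hm2def
  have hcval : (∫ ω, lam ω * (1 - lam ω) ∂P) = 1/2 - m2 := by
    have heq : (fun ω => lam ω * (1 - lam ω)) = fun ω => lam ω - lam ω ^ 2 := by
      funext ω; ring
    rw [heq, integral_sub hint1 hint2, hlam_mean, hm2def]
  have hm2pos : 0 < m2 := by rw [hcval] at hc_lt; linarith
  have hm2lt : m2 < 1/2 := by rw [hcval] at hc_pos; linarith
  -- key integral computation
  have key : ∀ p q : ℝ, (∫ ω, (lam ω * p + (1 - lam ω) * q) ^ 2 ∂P)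
      = m2 * p ^ 2 + m2 * q ^ 2 + (1 - 2 * m2) * (p * q) := by
    intro p q
    have heq : (fun ω => (lam ω * p + (1 - lam ω) * q) ^ 2)
        = fun ω => ((p - q) ^ 2 * lam ω ^ 2 + (2 * q * (p - q)) * lam ω) + q ^ 2 := by
      funext ω; ring
    have ha : Integrable (fun ω => (p - q) ^ 2 * lam ω ^ 2) P := hint2.const_mul _
    have hb : Integrable (fun ω => (2 * q * (p - q)) * lam ω) P := hint1.const_mul _
    have hab : Integrable (fun ω => (p - q) ^ 2 * lam ω ^ 2 + (2 * q * (p - q)) * lam ω) P :=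
      ha.add hb
    rw [heq, integral_add hab (integrable_const _), integral_add ha hb,
      integral_const_mul, integral_const_mul, integral_const, hlam_mean, ← hm2def]
    simp
    ring
  -- residual notation
  set R : (Fin d → ℝ) → ℝ → Fin n → ℝ :=
    fun w'' b'' i => y i - ∑ k, w'' k * x i k - b'' with hR
  have hre : ∀ (w'' : Fin d → ℝ) (b'' : ℝ) (i j : Fin n) (ω : Ω),
      lam ω * y i + (1 - lam ω) * y j
        - (∑ k, w'' k * (lam ω * x i k + (1 - lam ω) * x j k)) - b''
      = lam ω * R w'' b'' i + (1 - lam ω) * R w'' b'' j := by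
    intro w'' b'' i j ω
    have hsum : (∑ k, w'' k * (lam ω * x i k + (1 - lam ω) * x j k))
        = lam ω * ∑ k, w'' k * x i k + (1 - lam ω) * ∑ k, w'' k * x j k := by
      rw [Finset.mul_sum, Finset.mul_sum, ← Finset.sum_add_distrib]
      exact Finset.sum_congr rfl fun k _ => by ring
    rw [hsum, hR]; ring
  -- double sum formula
  have hS : ∀ (w'' : Fin d → ℝ) (b'' : ℝ),
      (∑ i, ∑ j, ∫ ω, (lam ω * y i + (1 - lam ω) * y j
          - ∑ k, w'' k * (lam ω * x i k + (1 - lam ω) * x j k) - b'') ^ 2 ∂P)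
      = 2 * m2 * (n : ℝ) * (∑ i, (R w'' b'' i) ^ 2)
          + (1 - 2 * m2) * (∑ i, R w'' b'' i) ^ 2 := by
    intro w'' b''
    have h1 : ∀ i j : Fin n,
        (∫ ω, (lam ω * y i + (1 - lam ω) * y j
          - ∑ k, w'' k * (lam ω * x i k + (1 - lam ω) * x j k) - b'') ^ 2 ∂P)
        = m2 * (R w'' b'' i) ^ 2 + m2 * (R w'' b'' j) ^ 2
            + (1 - 2 * m2) * (R w'' b'' i * R w'' b'' j) := by
      intro i j
      rw [show (fun ω => (lam ω * y i + (1 - lam ω) * y j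
          - ∑ k, w'' k * (lam ω * x i k + (1 - lam ω) * x j k) - b'') ^ 2)
        = fun ω => (lam ω * R w'' b'' i + (1 - lam ω) * R w'' b'' j) ^ 2 from
          funext fun ω => by rw [hre w'' b'' i j ω]]
      exact key _ _
    simp_rw [h1]
    rw [Finset.sum_comm (f := fun i j => m2 * (R w'' b'' i) ^ 2 + m2 * (R w'' b'' j) ^ 2
          + (1 - 2 * m2) * (R w'' b'' i * R w'' b'' j))]
    simp only [Finset.sum_add_distrib, Finset.sum_const, Finset.card_univ, Fintype.card_fin,
      nsmul_eq_mul, ← Finset.mul_sum, ← Finset.sum_mul, sq]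
    ring
  rw [hS w b, hS w' b']
  -- mean residual at minimizer is zero
  have hS1 : (∑ i, R w b i) = 0 := by
    set s : ℝ := (∑ i, R w b i) / n with hs
    have h := hmin w (b + s)
    have hexp : (∑ i, (y i - ∑ k, w k * x i k - (b + s)) ^ 2)
        = ∑ i, (R w b i) ^ 2 - 2 * s * (∑ i, R w b i) + (n : ℝ) * s ^ 2 := by
      have : ∀ i, (y i - ∑ k, w k * x i k - (b + s)) ^ 2
          = (R w b i) ^ 2 - 2 * s * R w b i + s ^ 2 := by
        intro i; rw [hR]; ring
      simp_rw [this]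
      rw [Finset.sum_add_distrib, Finset.sum_sub_distrib, ← Finset.mul_sum,
        Finset.sum_const, Finset.card_univ, Fintype.card_fin, nsmul_eq_mul]
    rw [hexp] at h
    have hs' : (∑ i, R w b i) = (n : ℝ) * s := by
      rw [hs]; field_simp
    have hs0 : s = 0 := by
      rw [hs'] at h
      have h3 := le_of_mul_le_mul_left h (by positivity : (0:ℝ) < 1 / n)
      have hs2 : s ^ 2 = 0 := by nlinarith [sq_nonneg s, hn']
      exact sq_eq_zero_iff.mp hs2
    rw [hs', hs0, mul_zero]
  -- S2 comparison
  have hS2 : (∑ i, (R w b i) ^ 2) ≤ ∑ i, (R w' b' i) ^ 2 := by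
    have h := hmin w' b'
    have hpos : (0:ℝ) < 1 / n := by positivity
    exact le_of_mul_le_mul_left h hpos
  rw [hS1]
  have hsq : 0 ≤ (∑ i, R w' b' i) ^ 2 := sq_nonneg _
  have hinv : (0:ℝ) < 1 / (n : ℝ) ^ 2 := by positivity
  have hm2n : 0 ≤ 2 * m2 * (n : ℝ) := by positivity
  have hinner : 2 * m2 * (n:ℝ) * (∑ i, (R w b i) ^ 2) + (1 - 2 * m2) * (0:ℝ) ^ 2
      ≤ 2 * m2 * (n:ℝ) * (∑ i, (R w' b' i) ^ 2) + (1 - 2 * m2) * (∑ i, R w' b' i) ^ 2 := by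
    nlinarith [mul_le_mul_of_nonneg_left hS2 hm2n, hsq, hm2lt]
  exact mul_le_mul_of_nonneg_left hinner (le_of_lt hinv)
end

section
/- Let Y be a finite set with |Y| ≥ 2, let p̂ : Y → (0,1] be a probability mass function with p̂(y) > 0 for all y, let y_i ∈ Y, and let α ∈ [0,1]. Assume min_{y ≠ y_i} p̂(y) ≤ p̂(y_i). Then the supremum of the expected negative log-likelihood over the credal set Q_i^α = { p : Y → [0,1] : Σ_y p(y) = 1, p(y_i) ≥ 1−α } is attained and equals sup_{p ∈ Q_i^α} Σ_{y ∈ Y} p(y)·(−log p̂(y)) = −(1−α) log p̂(y_i) − α log min_{y ≠ y_i} p̂(y), with the supremum attained at the vertex placing mass 1−α on y_i and mass α on an argmin of p̂ over Y \ {y_i}. -/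
open Finset

/-- **Closed form of the pessimistic label loss.**
On a finite label set `Y` with at least two elements (encoded by
`(univ.erase yi).Nonempty`), if the predicted pmf `p̂` is strictly positive and
`min_{y ≠ yi} p̂(y) ≤ p̂(yi)`, then the supremum of `p ↦ Σ_y p(y)(-log p̂(y))`
over the credal set `{p pmf : p(yi) ≥ 1-α}` is attained and equals
`-(1-α) log p̂(yi) - α log min_{y ≠ yi} p̂(y)`, the maximizer being the vertex
placing mass `1-α` on `yi` and `α` on an argmin of `p̂` over `Y \ {yi}`. -/
theorem pessimistic_label_loss_closed_form
    {Y : Type*} [Fintype Y] [DecidableEq Y]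
    (yi : Y) (hne : (univ.erase yi).Nonempty)
    (phat : Y → ℝ) (hpos : ∀ y, 0 < phat y) (hle : ∀ y, phat y ≤ 1)
    (hsum : ∑ y, phat y = 1)
    (α : ℝ) (hα0 : 0 ≤ α) (hα1 : α ≤ 1)
    (hmin : (univ.erase yi).inf' hne phat ≤ phat yi) :
    IsGreatest
        {t : ℝ | ∃ p : Y → ℝ,
          ((∀ y, 0 ≤ p y ∧ p y ≤ 1) ∧ ∑ y, p y = 1 ∧ 1 - α ≤ p yi) ∧
          t = ∑ y, p y * (-Real.log (phat y))}
        (-((1 - α) * Real.log (phat yi))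
          - α * Real.log ((univ.erase yi).inf' hne phat)) ∧
      ∃ ystar ∈ univ.erase yi,
        phat ystar = (univ.erase yi).inf' hne phat ∧
        ∑ y, (if y = yi then 1 - α else if y = ystar then α else 0)
            * (-Real.log (phat y))
          = -((1 - α) * Real.log (phat yi))
            - α * Real.log ((univ.erase yi).inf' hne phat) := by
  set m := (univ.erase yi).inf' hne phat with hm
  obtain ⟨ystar, hys, hyseq⟩ := Finset.exists_mem_eq_inf' hne phat
  have hysne : ystar ≠ yi := Finset.ne_of_mem_erase hys
  have hmpos : 0 < m := by rw [hm, hyseq]; exact hpos ystar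
  have hvertex :
      ∑ y, (if y = yi then 1 - α else if y = ystar then α else 0)
          * (-Real.log (phat y))
        = -((1 - α) * Real.log (phat yi)) - α * Real.log m := by
    rw [Fintype.sum_eq_add yi ystar hysne.symm
        (fun c hc => by simp [hc.1, hc.2])]
    simp [hysne, hyseq.symm]
    ring
  constructor
  · constructor
    · refine ⟨fun y => if y = yi then 1 - α else if y = ystar then α else 0,
        ⟨⟨fun y => ?_, ?_, ?_⟩, hvertex.symm⟩⟩
      · dsimp only; split_ifs <;> constructor <;> linarith
      · rw [Fintype.sum_eq_add yi ystar hysne.symm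
          (fun c hc => by simp [hc.1, hc.2])]
        simp [hysne]
      · simp
    · rintro t ⟨p, ⟨⟨hp01, hpsum, hpyi⟩, rfl⟩⟩
      have hA : Real.log m ≤ Real.log (phat yi) :=
        Real.log_le_log hmpos hmin
      have hsplit : ∑ y, p y * (-Real.log (phat y))
          = p yi * (-Real.log (phat yi))
            + ∑ y ∈ univ.erase yi, p y * (-Real.log (phat y)) :=
        (Finset.add_sum_erase univ _ (mem_univ yi)).symm
      have herase_sum : ∑ y ∈ univ.erase yi, p y = 1 - p yi := by
        have := Finset.add_sum_erase univ p (mem_univ yi)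
        linarith [hpsum ▸ this]
      have hS : ∑ y ∈ univ.erase yi, p y * (-Real.log (phat y))
          ≤ (1 - p yi) * (-Real.log m) := by
        rw [← herase_sum, Finset.sum_mul]
        refine Finset.sum_le_sum fun y hy => ?_
        have h1 : m ≤ phat y := Finset.inf'_le _ hy
        have h2 : Real.log m ≤ Real.log (phat y) :=
          Real.log_le_log hmpos h1
        exact mul_le_mul_of_nonneg_left (by linarith) (hp01 y).1
      rw [hsplit]
      nlinarith [hpyi, hA, (hp01 yi).1]
  · exact ⟨ystar, hys, hyseq.symm, hvertex⟩
end
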